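/- arXiv:1010.4914 — 3 statements merged into one kernel-verified Lean document; each statement's English description precedes it below -/
import Mathlib

section
/- Let X be a real-valued random variable on a probability space with E[X] ≤ 0 and E[e^{|X|}] ≤ K for some K > 0. Then for all t ∈ [0,1], E[e^{tX}] ≤ exp(K t²). -/
open MeasureTheory Real Nat

lemma real_exp_eq_tsum (y : ℝ) : Real.exp y = ∑' n : ℕ, y ^ n / n ! := by
  rw [Real.exp_eq_exp_ℝ, NormedSpace.exp_eq_tsum_div]

lemma exp_split (y : ℝ) :
    Real.exp y = 1 + y + ∑' n : ℕ, y ^ (n + 2) / (n + 2)! := by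
  have hs := Real.summable_pow_div_factorial y
  rw [real_exp_eq_tsum y, Summable.tsum_eq_zero_add hs,
    Summable.tsum_eq_zero_add ((summable_nat_add_iff 1).2 hs)]
  norm_num [Nat.factorial]
  ring

set_option maxHeartbeats 1000000 in
lemma key_ineq {t : ℝ} (ht0 : 0 ≤ t) (ht1 : t ≤ 1) (x : ℝ) :
    Real.exp (t * x) ≤ 1 + t * x + t ^ 2 * Real.exp |x| := by
  have hsx := Real.summable_pow_div_factorial |x|
  have hsx2 : Summable (fun n : ℕ => |x| ^ (n + 2) / (n + 2)!) :=
    (summable_nat_add_iff 2).2 hsx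
  have hstx2 : Summable (fun n : ℕ => (t * x) ^ (n + 2) / (n + 2)!) :=
    (summable_nat_add_iff 2).2 (Real.summable_pow_div_factorial (t * x))
  have htail : (∑' n : ℕ, (t * x) ^ (n + 2) / (n + 2)!)
      ≤ t ^ 2 * ∑' n : ℕ, |x| ^ (n + 2) / (n + 2)! := by
    rw [← tsum_mul_left]
    refine Summable.tsum_le_tsum (fun n => ?_) hstx2 (hsx2.mul_left _)
    have hfac : (0:ℝ) < ((n + 2)! : ℝ) := by positivity
    have h1 : (t * x) ^ (n + 2) ≤ |t * x| ^ (n + 2) :=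
      (le_abs_self _).trans_eq (abs_pow _ _)
    have h2 : |t * x| ^ (n + 2) ≤ t ^ 2 * |x| ^ (n + 2) := by
      rw [abs_mul, abs_of_nonneg ht0, mul_pow]
      exact mul_le_mul_of_nonneg_right
        (pow_le_pow_of_le_one ht0 ht1 (Nat.le_add_left 2 n))
        (pow_nonneg (abs_nonneg x) _)
    calc (t * x) ^ (n + 2) / ((n + 2)! : ℝ)
        ≤ (t ^ 2 * |x| ^ (n + 2)) / ((n + 2)! : ℝ) :=
          (div_le_div_iff_of_pos_right hfac).2 (h1.trans h2)
      _ = t ^ 2 * (|x| ^ (n + 2) / ((n + 2)! : ℝ)) := by ring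
  have htail2 : (∑' n : ℕ, |x| ^ (n + 2) / (n + 2)!) ≤ Real.exp |x| := by
    have := exp_split |x|
    nlinarith [abs_nonneg x]
  calc Real.exp (t * x) = 1 + t * x + ∑' n : ℕ, (t * x) ^ (n + 2) / (n + 2)! :=
        exp_split (t * x)
    _ ≤ 1 + t * x + t ^ 2 * ∑' n : ℕ, |x| ^ (n + 2) / (n + 2)! := by linarith
    _ ≤ 1 + t * x + t ^ 2 * Real.exp |x| := by nlinarith [sq_nonneg t]

theorem stmt_0 {Ω : Type*} [MeasurableSpace Ω] (μ : Measure Ω) [IsProbabilityMeasure μ]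
    (X : Ω → ℝ) (K : ℝ) (hK : 0 < K)
    (hXint : Integrable X μ)
    (hexpint : Integrable (fun ω => Real.exp |X ω|) μ)
    (hmean : ∫ ω, X ω ∂μ ≤ 0)
    (hexp : ∫ ω, Real.exp |X ω| ∂μ ≤ K) :
    ∀ t ∈ Set.Icc (0 : ℝ) 1, ∫ ω, Real.exp (t * X ω) ∂μ ≤ Real.exp (K * t ^ 2) := by
  rintro t ⟨ht0, ht1⟩
  have hmeas : AEStronglyMeasurable (fun ω => Real.exp (t * X ω)) μ :=
    Real.continuous_exp.comp_aestronglyMeasurable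
      (hXint.aestronglyMeasurable.const_mul t)
  have hint : Integrable (fun ω => Real.exp (t * X ω)) μ := by
    refine hexpint.mono hmeas (ae_of_all _ fun ω => ?_)
    rw [Real.norm_eq_abs, abs_of_pos (Real.exp_pos _), Real.norm_eq_abs,
      abs_of_pos (Real.exp_pos _)]
    apply Real.exp_le_exp.2
    calc t * X ω ≤ |t * X ω| := le_abs_self _
      _ = t * |X ω| := by rw [abs_mul, abs_of_nonneg ht0]
      _ ≤ 1 * |X ω| := by gcongr
      _ = |X ω| := one_mul _
  have hint1 : Integrable (fun ω => 1 + t * X ω) μ :=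
    (integrable_const 1).add (hXint.const_mul t)
  have hintRHS : Integrable (fun ω => 1 + t * X ω + t ^ 2 * Real.exp |X ω|) μ :=
    hint1.add (hexpint.const_mul (t ^ 2))
  have h1 : ∫ ω, Real.exp (t * X ω) ∂μ
      ≤ ∫ ω, (1 + t * X ω + t ^ 2 * Real.exp |X ω|) ∂μ :=
    integral_mono hint hintRHS (fun ω => key_ineq ht0 ht1 (X ω))
  have e1 : ∫ ω, (1 + t * X ω + t ^ 2 * Real.exp |X ω|) ∂μ
      = (∫ ω, (1 + t * X ω) ∂μ) + ∫ ω, t ^ 2 * Real.exp |X ω| ∂μ :=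
    integral_add hint1 (hexpint.const_mul (t ^ 2))
  have e2 : ∫ ω, (1 + t * X ω) ∂μ = (∫ _ω, (1:ℝ) ∂μ) + ∫ ω, t * X ω ∂μ :=
    integral_add (integrable_const 1) (hXint.const_mul t)
  have h2 : ∫ ω, (1 + t * X ω + t ^ 2 * Real.exp |X ω|) ∂μ
      = 1 + t * ∫ ω, X ω ∂μ + t ^ 2 * ∫ ω, Real.exp |X ω| ∂μ := by
    rw [e1, e2, integral_const, integral_const_mul, integral_const_mul]
    simp
  have h3 : 1 + t * ∫ ω, X ω ∂μ + t ^ 2 * ∫ ω, Real.exp |X ω| ∂μ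
      ≤ 1 + K * t ^ 2 := by
    nlinarith [sq_nonneg t, mul_nonneg ht0 (neg_nonneg.2 hmean)]
  calc ∫ ω, Real.exp (t * X ω) ∂μ ≤ 1 + K * t ^ 2 := by linarith
    _ ≤ Real.exp (K * t ^ 2) := by
        have := Real.add_one_le_exp (K * t ^ 2); linarith
end

section
/- Let X be a real-valued random variable with E[X] ≤ 0 and E[e^{|X|}] ≤ K. Then for all t ∈ [0,1], E[e^{tX}] ≤ 1 + K t². -/
/-
The Taylor series gives e^{tu} - 1 - tu = Σ_{n ≥ 2} (tu)^n / n!, and for |t| ≤ 1 each term is at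
most t² |u|^n / n!, so e^{tu} ≤ 1 + tu + t² e^{|u|}. Integrating, the linear term has nonpositive
mean and the quadratic one is at most K t².
-/

open MeasureTheory Real

open Nat in
lemma Real.hasSum_pow_div_factorial (x : ℝ) : HasSum (fun n : ℕ => x ^ n / n !) (exp x) := by
  rw [Real.exp_eq_exp_ℝ]
  exact NormedSpace.expSeries_div_hasSum_exp x

open Nat in
theorem Real.exp_mul_sub_one_sub_le {t : ℝ} (ht : |t| ≤ 1) (u : ℝ) :
    exp (t * u) - 1 - t * u ≤ t ^ 2 * (exp |u| - 1 - |u|) := by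
  have tail (x : ℝ) : HasSum (fun n : ℕ => x ^ (n + 2) / (n + 2)!) (exp x - 1 - x) := by
    simpa [Finset.sum_range_succ, sub_sub] using
      (hasSum_nat_add_iff' 2).2 (hasSum_pow_div_factorial x)
  refine hasSum_le (fun n => ?_) (tail (t * u)) ((tail |u|).mul_left (t ^ 2))
  rw [mul_div_assoc']
  gcongr
  calc (t * u) ^ (n + 2) ≤ |t| ^ (n + 2) * |u| ^ (n + 2) := by
        rw [← mul_pow, ← abs_mul, ← abs_pow]; exact le_abs_self _
    _ ≤ |t| ^ 2 * |u| ^ (n + 2) := by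
        have := pow_le_pow_of_le_one (abs_nonneg t) ht (Nat.le_add_left 2 n)
        gcongr
    _ = t ^ 2 * |u| ^ (n + 2) := by rw [sq_abs]

theorem Real.exp_mul_le_one_add_mul_add_sq_mul_exp_abs {t : ℝ} (ht : |t| ≤ 1) (u : ℝ) :
    exp (t * u) ≤ 1 + t * u + t ^ 2 * exp |u| := by
  have h := exp_mul_sub_one_sub_le ht u
  have : 0 ≤ t ^ 2 * (1 + |u|) := by positivity
  linarith

theorem integral_exp_mul_le {Ω : Type*} [MeasurableSpace Ω] {μ : Measure Ω}
    [IsProbabilityMeasure μ]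
    {X : Ω → ℝ} (hX : Integrable X μ) (hexp : Integrable (fun ω => exp |X ω|) μ)
    {t : ℝ} (ht : |t| ≤ 1) :
    ∫ ω, exp (t * X ω) ∂μ ≤ 1 + t * ∫ ω, X ω ∂μ + t ^ 2 * ∫ ω, exp |X ω| ∂μ := by
  have hlin : Integrable (fun ω => 1 + t * X ω) μ := (integrable_const 1).add (hX.const_mul t)
  have hexp_mul : Integrable (fun ω => exp (t * X ω)) μ := by
    refine hexp.mono (by fun_prop) (ae_of_all _ fun ω => ?_)
    rw [norm_of_nonneg (exp_pos _).le, norm_of_nonneg (exp_pos _).le, exp_le_exp]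
    calc t * X ω ≤ |t| * |X ω| := abs_mul t (X ω) ▸ le_abs_self _
      _ ≤ |X ω| := mul_le_of_le_one_left (abs_nonneg _) ht
  calc ∫ ω, exp (t * X ω) ∂μ ≤ ∫ ω, (1 + t * X ω + t ^ 2 * exp |X ω|) ∂μ :=
        integral_mono hexp_mul (hlin.add (hexp.const_mul _))
          fun ω => exp_mul_le_one_add_mul_add_sq_mul_exp_abs ht (X ω)
    _ = _ := by
        rw [integral_add hlin (hexp.const_mul _), integral_add (integrable_const 1) (hX.const_mul t),
          integral_const_mul, integral_const_mul]
        simp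

theorem stmt_1_general {Ω : Type*} [MeasurableSpace Ω] (μ : Measure Ω) [IsProbabilityMeasure μ]
    (X : Ω → ℝ) (K : ℝ)
    (hXint : Integrable X μ)
    (hexpint : Integrable (fun ω => Real.exp |X ω|) μ)
    (hmean : ∫ ω, X ω ∂μ ≤ 0)
    (hexp : ∫ ω, Real.exp |X ω| ∂μ ≤ K) :
    ∀ t ∈ Set.Icc (0 : ℝ) 1, ∫ ω, Real.exp (t * X ω) ∂μ ≤ 1 + K * t ^ 2 := by
  rintro t ⟨ht0, ht1⟩
  have hbound := integral_exp_mul_le hXint hexpint (abs_le.2 ⟨by linarith, ht1⟩)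
  have hlin : t * ∫ ω, X ω ∂μ ≤ 0 := mul_nonpos_of_nonneg_of_nonpos ht0 hmean
  have hquad : t ^ 2 * ∫ ω, exp |X ω| ∂μ ≤ t ^ 2 * K := by gcongr
  linarith

theorem stmt_1 {Ω : Type*} [MeasurableSpace Ω] (μ : Measure Ω) [IsProbabilityMeasure μ]
    (X : Ω → ℝ) (K : ℝ) (hK : 0 < K)
    (hXint : Integrable X μ)
    (hexpint : Integrable (fun ω => Real.exp |X ω|) μ)
    (hmean : ∫ ω, X ω ∂μ ≤ 0)
    (hexp : ∫ ω, Real.exp |X ω| ∂μ ≤ K) :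
    ∀ t ∈ Set.Icc (0 : ℝ) 1, ∫ ω, Real.exp (t * X ω) ∂μ ≤ 1 + K * t ^ 2 :=
  stmt_1_general μ X K hXint hexpint hmean hexp
end

section
/- Let (X_i)_{1≤i≤n} be a finite sequence of martingale differences adapted to a filtration (F_i) with F_0 trivial, such that for some K > 0 and all i, E[e^{|X_i|} | F_{i−1}] ≤ K almost surely. Set M_n = X_1 + ... + X_n. Then for all t ∈ [0,1], E[e^{t M_n}] ≤ exp(n K t²) and E[e^{−t M_n}] ≤ exp(n K t²). -/
/-!
For `|s| ≤ 1` convexity of `exp` gives the pointwise bound `e^{sx} ≤ 1 + sx + s² e^{|x|}`.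
Conditioning on `ℱ k`, the linear term has conditional mean zero, so
`E[e^{s X_{k+1}} | ℱ k] ≤ 1 + s² K ≤ e^{K s²}`. Pulling the `ℱ k`-measurable factor `e^{s M_k}`
out of the conditional expectation gives `E[e^{s M_{k+1}}] ≤ e^{K s²} E[e^{s M_k}]`, and induction
on `k` gives `E[e^{s M_n}] ≤ e^{n K s²}`; take `s = ±t`. Since `e^{s M_k}` is unbounded, the
pull-out is done on its truncations and passed to the limit by monotone convergence, which also
shows that `e^{s M_{k+1}}` is integrable.
-/

open MeasureTheory Real

namespace Real

theorem exp_mul_sub_one_le_mul {c : ℝ} (hc₀ : 0 ≤ c) (hc₁ : c ≤ 1) (a : ℝ) :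
    exp (c * a) - 1 ≤ c * (exp a - 1) := by
  have h := convexOn_exp.2 (Set.mem_univ a) (Set.mem_univ 0) hc₀ (sub_nonneg.2 hc₁)
    (add_sub_cancel c 1)
  simp only [smul_eq_mul, mul_zero, add_zero, exp_zero, mul_one] at h
  linarith

theorem exp_mul_sub_one_sub_le_sq_mul {c : ℝ} (hc₀ : 0 ≤ c) (hc₁ : c ≤ 1) {a : ℝ} (ha : 0 ≤ a) :
    exp (c * a) - 1 - c * a ≤ c ^ 2 * (exp a - 1 - a) := by
  let h : ℝ → ℝ := fun x => c ^ 2 * (exp x - 1 - x) - (exp (c * x) - 1 - c * x)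
  have hderiv : ∀ x, HasDerivAt h (c * (c * (exp x - 1) - (exp (c * x) - 1))) x := by
    intro x
    have hcx : HasDerivAt (fun x => exp (c * x) - 1 - c * x) (exp (c * x) * c - c) x :=
      ((((hasDerivAt_id' x).const_mul c).exp).sub_const 1).sub ((hasDerivAt_id' x).const_mul c)
        |>.congr_deriv (by simp)
    exact ((((hasDerivAt_exp x).sub_const 1).sub (hasDerivAt_id' x)).const_mul (c ^ 2)).sub hcx
      |>.congr_deriv (by ring)
  have hmono : Monotone h := monotone_of_deriv_nonneg (fun x => (hderiv x).differentiableAt)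
    fun x => (hderiv x).deriv ▸ mul_nonneg hc₀ (sub_nonneg.2 (exp_mul_sub_one_le_mul hc₀ hc₁ x))
  have := hmono ha
  simp only [h, mul_zero, exp_zero, sub_self] at this
  linarith

theorem exp_sub_one_sub_le_abs (u : ℝ) : exp u - 1 - u ≤ exp |u| - 1 - |u| := by
  rcases le_or_gt 0 u with hu | hu
  · rw [abs_of_nonneg hu]
  · rw [abs_of_neg hu]
    have := sinh_le_self_iff.2 hu.le
    rw [sinh_eq] at this
    linarith

theorem exp_mul_le_one_add_mul_add_sq_mul_exp_abs_s3 {s : ℝ} (hs : |s| ≤ 1) (x : ℝ) :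
    exp (s * x) ≤ 1 + s * x + s ^ 2 * exp |x| := by
  have h := exp_mul_sub_one_sub_le_sq_mul (abs_nonneg s) hs (abs_nonneg x)
  rw [← abs_mul, sq_abs] at h
  nlinarith [exp_sub_one_sub_le_abs (s * x), sq_nonneg s, abs_nonneg x]

end Real

namespace MeasureTheory

variable {Ω : Type*} {m m0 : MeasurableSpace Ω} {μ : Measure Ω} {f g : Ω → ℝ} {s c K : ℝ}

theorem integral_mul_le_of_condExp_le_of_bounded [IsFiniteMeasure μ] (hm : m ≤ m0)
    (hg : StronglyMeasurable[m] g) (hg₀ : 0 ≤ g) {R : ℝ} (hgR : ∀ ω, g ω ≤ R) (hf : Integrable f μ)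
    (hfc : μ[f|m] ≤ᵐ[μ] fun _ => c) :
    ∫ ω, g ω * f ω ∂μ ≤ c * ∫ ω, g ω ∂μ := by
  have hgR' : ∀ᵐ ω ∂μ, ‖g ω‖ ≤ R := .of_forall fun ω => by
    rw [Real.norm_of_nonneg (hg₀ ω)]; exact hgR ω
  have hgi : Integrable g μ := (integrable_const R).mono' (hg.mono hm).aestronglyMeasurable hgR'
  calc ∫ ω, g ω * f ω ∂μ = ∫ ω, μ[g * f|m] ω ∂μ := (integral_condExp hm).symm
    _ = ∫ ω, g ω * μ[f|m] ω ∂μ :=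
      integral_congr_ae (condExp_stronglyMeasurable_mul_of_bound hm hg hf R hgR')
    _ ≤ ∫ ω, c * g ω ∂μ := by
      refine integral_mono_ae (integrable_condExp.bdd_mul (hg.mono hm).aestronglyMeasurable hgR')
        (hgi.const_mul c) ?_
      filter_upwards [hfc] with ω hω
      rw [mul_comm c]
      exact mul_le_mul_of_nonneg_left hω (hg₀ ω)
    _ = c * ∫ ω, g ω ∂μ := integral_const_mul c _

theorem lintegral_ofReal_mul_le_of_condExp_le [IsFiniteMeasure μ] (hm : m ≤ m0)
    (hg : StronglyMeasurable[m] g) (hg₀ : 0 ≤ g) (hgi : Integrable g μ) (hf₀ : 0 ≤ f)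
    (hf : Integrable f μ) (hc : 0 ≤ c) (hfc : μ[f|m] ≤ᵐ[μ] fun _ => c) :
    ∫⁻ ω, ENNReal.ofReal (g ω * f ω) ∂μ ≤ ENNReal.ofReal (c * ∫ ω, g ω ∂μ) := by
  let gₙ : ℕ → Ω → ℝ := fun n ω => min (g ω) n
  have hgₙ : ∀ n, StronglyMeasurable[m] (gₙ n) := fun n =>
    (continuous_id.min continuous_const).comp_stronglyMeasurable hg
  have hgₙ₀ : ∀ n, 0 ≤ gₙ n := fun n ω => le_min (hg₀ ω) n.cast_nonneg
  have hgₙf : ∀ n, Integrable (fun ω => gₙ n ω * f ω) μ := fun n =>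
    hf.bdd_mul ((hgₙ n).mono hm).aestronglyMeasurable (c := n) (.of_forall fun ω => by
      rw [Real.norm_of_nonneg (hgₙ₀ n ω)]; exact min_le_right _ _)
  have hsup : ∫⁻ ω, ENNReal.ofReal (g ω * f ω) ∂μ
      = ⨆ n : ℕ, ∫⁻ ω, ENNReal.ofReal (gₙ n ω * f ω) ∂μ := by
    rw [← lintegral_iSup' (fun n => (hgₙf n).aemeasurable.ennreal_ofReal)
      (.of_forall fun ω n₁ n₂ h => ENNReal.ofReal_le_ofReal
        (mul_le_mul_of_nonneg_right (min_le_min le_rfl (Nat.cast_le.2 h)) (hf₀ ω)))]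
    refine lintegral_congr fun ω => le_antisymm ?_ ?_
    · refine le_iSup_of_le ⌈g ω⌉₊ ?_
      rw [show gₙ ⌈g ω⌉₊ ω = g ω from min_eq_left (Nat.le_ceil _)]
    · exact iSup_le fun n => ENNReal.ofReal_le_ofReal
        (mul_le_mul_of_nonneg_right (min_le_left _ _) (hf₀ ω))
  rw [hsup]
  refine iSup_le fun n => ?_
  rw [← ofReal_integral_eq_lintegral_ofReal (hgₙf n)
    (.of_forall fun ω => mul_nonneg (hgₙ₀ n ω) (hf₀ ω))]
  refine ENNReal.ofReal_le_ofReal ((integral_mul_le_of_condExp_le_of_bounded hm (hgₙ n)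
    (hgₙ₀ n) (fun ω => min_le_right _ _) hf hfc).trans ?_)
  exact mul_le_mul_of_nonneg_left (integral_mono_of_nonneg (.of_forall (hgₙ₀ n)) hgi
    (.of_forall fun ω => min_le_left _ _)) hc

theorem integrable_mul_and_integral_mul_le_of_condExp_le [IsFiniteMeasure μ]
    (hm : m ≤ m0) (hg : StronglyMeasurable[m] g) (hg₀ : 0 ≤ g) (hgi : Integrable g μ)
    (hf₀ : 0 ≤ f) (hf : Integrable f μ) (hc : 0 ≤ c) (hfc : μ[f|m] ≤ᵐ[μ] fun _ => c) :
    Integrable (fun ω => g ω * f ω) μ ∧ ∫ ω, g ω * f ω ∂μ ≤ c * ∫ ω, g ω ∂μ := by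
  have hgf₀ : 0 ≤ᵐ[μ] fun ω => g ω * f ω := .of_forall fun ω => mul_nonneg (hg₀ ω) (hf₀ ω)
  have hmeas : AEStronglyMeasurable (fun ω => g ω * f ω) μ :=
    (hg.mono hm).aestronglyMeasurable.mul hf.aestronglyMeasurable
  have hlint := lintegral_ofReal_mul_le_of_condExp_le hm hg hg₀ hgi hf₀ hf hc hfc
  refine ⟨⟨hmeas, ?_⟩, ?_⟩
  · rw [hasFiniteIntegral_iff_ofReal hgf₀]
    exact hlint.trans_lt ENNReal.ofReal_lt_top
  · rw [integral_eq_lintegral_of_nonneg_ae hgf₀ hmeas]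
    exact ENNReal.toReal_le_of_le_ofReal (mul_nonneg hc (integral_nonneg hg₀)) hlint

theorem integrable_exp_mul_of_abs_le (hs : |s| ≤ 1) (hf : AEStronglyMeasurable f μ)
    (hexp : Integrable (fun ω => exp |f ω|) μ) :
    Integrable (fun ω => exp (s * f ω)) μ := by
  refine hexp.mono' (continuous_exp.comp_aestronglyMeasurable (hf.const_mul s))
    (.of_forall fun ω => ?_)
  rw [Real.norm_of_nonneg (exp_pos _).le, exp_le_exp, ← one_mul |f ω|]
  exact (le_abs_self _).trans (abs_mul s (f ω) ▸ mul_le_mul_of_nonneg_right hs (abs_nonneg _))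

theorem condExp_exp_mul_le [IsFiniteMeasure μ] (hm : m ≤ m0) (hs : |s| ≤ 1)
    (hf : Integrable f μ) (hexp : Integrable (fun ω => exp |f ω|) μ) (hf₀ : μ[f|m] =ᵐ[μ] 0)
    (hK : ∀ᵐ ω ∂μ, μ[fun ω => exp |f ω| | m] ω ≤ K) :
    μ[fun ω => exp (s * f ω)|m] ≤ᵐ[μ] fun _ => 1 + s ^ 2 * K := by
  let E : Ω → ℝ := fun ω => exp |f ω|
  have hbound : μ[fun ω => exp (s * f ω)|m] ≤ᵐ[μ] μ[(fun _ => 1) + s • f + s ^ 2 • E|m] :=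
    condExp_mono (integrable_exp_mul_of_abs_le hs hf.aestronglyMeasurable hexp)
      (((integrable_const 1).add (hf.smul s)).add (hexp.smul _))
      (.of_forall fun ω => exp_mul_le_one_add_mul_add_sq_mul_exp_abs_s3 hs (f ω))
  have hlin : μ[(fun _ => 1) + s • f + s ^ 2 • E|m]
      =ᵐ[μ] (fun _ => 1) + s • μ[f|m] + s ^ 2 • μ[E|m] := by
    refine (condExp_add ((integrable_const 1).add (hf.smul s)) (hexp.smul _) m).trans ?_
    filter_upwards [condExp_add (integrable_const (1 : ℝ)) (hf.smul s) m,
      condExp_smul s f m, condExp_smul (s ^ 2) E m] with ω h₁ h₂ h₃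
    rw [Pi.add_apply, h₃, h₁, Pi.add_apply, h₂, condExp_const hm]
    rfl
  filter_upwards [hbound, hlin, hf₀, hK] with ω hb hl h₀ hK
  rw [hl] at hb
  simp only [Pi.add_apply, Pi.smul_apply, smul_eq_mul, h₀, Pi.zero_apply, mul_zero,
    add_zero] at hb
  exact hb.trans (by gcongr)

theorem integral_exp_mul_sum_le [IsProbabilityMeasure μ] (n : ℕ) (ℱ : Filtration ℕ m0)
    (X : ℕ → Ω → ℝ) (hK : 0 ≤ K)
    (hadapted : ∀ i ∈ Finset.Icc 1 n, StronglyMeasurable[ℱ i] (X i))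
    (hint : ∀ i ∈ Finset.Icc 1 n, Integrable (X i) μ)
    (hmd : ∀ i ∈ Finset.Icc 1 n, μ[X i | ℱ (i - 1)] =ᵐ[μ] 0)
    (hexpint : ∀ i ∈ Finset.Icc 1 n, Integrable (fun ω => exp |X i ω|) μ)
    (hcond : ∀ i ∈ Finset.Icc 1 n,
      ∀ᵐ ω ∂μ, (μ[fun ω' => exp |X i ω'| | ℱ (i - 1)]) ω ≤ K)
    (hs : |s| ≤ 1) {k : ℕ} (hk : k ≤ n) :
    Integrable (fun ω => exp (s * ∑ i ∈ Finset.Icc 1 k, X i ω)) μ ∧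
      ∫ ω, exp (s * ∑ i ∈ Finset.Icc 1 k, X i ω) ∂μ ≤ exp (k * K * s ^ 2) := by
  induction k with
  | zero => simp
  | succ k ih =>
    obtain ⟨hGi, hG⟩ := ih (by omega)
    have hk₁ : k + 1 ∈ Finset.Icc 1 n := Finset.mem_Icc.2 ⟨by omega, hk⟩
    have hG_meas : StronglyMeasurable[ℱ k] fun ω => exp (s * ∑ i ∈ Finset.Icc 1 k, X i ω) := by
      refine continuous_exp.comp_stronglyMeasurable
        ((Finset.stronglyMeasurable_fun_sum _ fun i hi => ?_).const_mul s)
      obtain ⟨hi₁, hik⟩ := Finset.mem_Icc.1 hi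
      exact (hadapted i (Finset.mem_Icc.2 ⟨hi₁, by omega⟩)).mono (ℱ.mono hik)
    have hY := condExp_exp_mul_le (ℱ.le k) hs (hint _ hk₁) (hexpint _ hk₁) (hmd _ hk₁)
      (hcond _ hk₁)
    obtain ⟨hGYi, hGY⟩ := integrable_mul_and_integral_mul_le_of_condExp_le (ℱ.le k) hG_meas
      (fun _ => by positivity) hGi (fun _ => by positivity)
      (integrable_exp_mul_of_abs_le hs (hint _ hk₁).aestronglyMeasurable (hexpint _ hk₁))
      (by positivity) hY
    simp_rw [Finset.sum_Icc_succ_top (by omega : 1 ≤ k + 1), mul_add, exp_add]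
    refine ⟨hGYi, hGY.trans ?_⟩
    calc (1 + s ^ 2 * K) * ∫ ω, exp (s * ∑ i ∈ Finset.Icc 1 k, X i ω) ∂μ
        ≤ exp (K * s ^ 2) * exp (k * K * s ^ 2) := by
          gcongr
          linarith [add_one_le_exp (K * s ^ 2)]
      _ = exp ((k + 1 : ℕ) * K * s ^ 2) := by
          rw [← exp_add]; congr 1; push_cast; ring

end MeasureTheory

theorem stmt_3_general {Ω : Type*} {m0 : MeasurableSpace Ω} (μ : Measure Ω) [IsProbabilityMeasure μ]
    (n : ℕ) (ℱ : MeasureTheory.Filtration ℕ m0)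
    (X : ℕ → Ω → ℝ) (K : ℝ) (hK : 0 < K)
    (hadapted : ∀ i ∈ Finset.Icc 1 n, StronglyMeasurable[ℱ i] (X i))
    (hint : ∀ i ∈ Finset.Icc 1 n, Integrable (X i) μ)
    (hmd : ∀ i ∈ Finset.Icc 1 n, μ[X i | ℱ (i - 1)] =ᵐ[μ] 0)
    (hexpint : ∀ i ∈ Finset.Icc 1 n, Integrable (fun ω => Real.exp |X i ω|) μ)
    (hcond : ∀ i ∈ Finset.Icc 1 n,
      ∀ᵐ ω ∂μ, (μ[fun ω' => Real.exp |X i ω'| | ℱ (i - 1)]) ω ≤ K) :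
    ∀ t ∈ Set.Icc (0 : ℝ) 1,
      (∫ ω, Real.exp (t * ∑ i ∈ Finset.Icc 1 n, X i ω) ∂μ ≤ Real.exp (n * K * t ^ 2)) ∧
      (∫ ω, Real.exp (-t * ∑ i ∈ Finset.Icc 1 n, X i ω) ∂μ ≤ Real.exp (n * K * t ^ 2)) := by
  rintro t ⟨ht₀, ht₁⟩
  have ht : |t| ≤ 1 := by rwa [abs_of_nonneg ht₀]
  have hneg := (integral_exp_mul_sum_le n ℱ X hK.le hadapted hint hmd hexpint hcond
    (s := -t) (by rwa [abs_neg]) le_rfl).2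
  rw [neg_sq] at hneg
  exact ⟨(integral_exp_mul_sum_le n ℱ X hK.le hadapted hint hmd hexpint hcond ht le_rfl).2, hneg⟩

theorem stmt_3 {Ω : Type*} {m0 : MeasurableSpace Ω} (μ : Measure Ω) [IsProbabilityMeasure μ]
    (n : ℕ) (ℱ : MeasureTheory.Filtration ℕ m0) (hF0 : ℱ 0 = ⊥)
    (X : ℕ → Ω → ℝ) (K : ℝ) (hK : 0 < K)
    (hadapted : ∀ i ∈ Finset.Icc 1 n, StronglyMeasurable[ℱ i] (X i))
    (hint : ∀ i ∈ Finset.Icc 1 n, Integrable (X i) μ)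
    (hmd : ∀ i ∈ Finset.Icc 1 n, μ[X i | ℱ (i - 1)] =ᵐ[μ] 0)
    (hexpint : ∀ i ∈ Finset.Icc 1 n, Integrable (fun ω => Real.exp |X i ω|) μ)
    (hcond : ∀ i ∈ Finset.Icc 1 n,
      ∀ᵐ ω ∂μ, (μ[fun ω' => Real.exp |X i ω'| | ℱ (i - 1)]) ω ≤ K) :
    ∀ t ∈ Set.Icc (0 : ℝ) 1,
      (∫ ω, Real.exp (t * ∑ i ∈ Finset.Icc 1 n, X i ω) ∂μ ≤ Real.exp (n * K * t ^ 2)) ∧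
      (∫ ω, Real.exp (-t * ∑ i ∈ Finset.Icc 1 n, X i ω) ∂μ ≤ Real.exp (n * K * t ^ 2)) :=
  stmt_3_general μ n ℱ X K hK hadapted hint hmd hexpint hcond
end
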